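/- Let Δ₂ ⊆ ℝ⁴ be the convex hull of the seven points (1,0,0,0), (0,1,0,0), (0,0,1,0), (0,0,0,1), (−1,−1,−1,−1), (1,1,1,1), (0,0,0,−1). Then the dual polytope Δ₂* = {m ∈ ℝ⁴ : ⟨m,n⟩ ≥ −1 for all n ∈ Δ₂} equals the convex hull of the twelve lattice points (4,−1,−1,−1), (−1,4,−1,−1), (−1,−1,4,−1), (2,−1,−1,−1), (−1,2,−1,−1), (−1,−1,2,−1), (0,−1,−1,1), (−1,0,−1,1), (−1,−1,0,1), (2,−1,−1,1), (−1,2,−1,1), (−1,−1,2,1). In particular Δ₂ is a reflexive polytope. -/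

import Mathlib

open Set

/-- A point of `ℝⁿ` is a lattice point if all its coordinates are integers. -/
def IsLatticePoint {n : ℕ} (x : Fin n → ℝ) : Prop := ∀ i, ∃ z : ℤ, x i = (z : ℝ)

/-- A lattice polytope is the convex hull of a finite set of lattice points. -/
def IsLatticePolytope {n : ℕ} (Δ : Set (Fin n → ℝ)) : Prop :=
  ∃ S : Finset (Fin n → ℝ), (∀ x ∈ S, IsLatticePoint x) ∧
    Δ = convexHull ℝ (S : Set (Fin n → ℝ))

/-- The polar dual `Δ* = {m | ⟨m,n⟩ ≥ -1 ∀ n ∈ Δ}`. -/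
def polarDual {n : ℕ} (Δ : Set (Fin n → ℝ)) : Set (Fin n → ℝ) :=
  {m | ∀ x ∈ Δ, -1 ≤ ∑ i, m i * x i}

/-- A reflexive polytope: a lattice polytope with `0` in its interior whose dual
is again a lattice polytope. -/
def IsReflexive {n : ℕ} (Δ : Set (Fin n → ℝ)) : Prop :=
  IsLatticePolytope Δ ∧ (0 : Fin n → ℝ) ∈ interior Δ ∧ IsLatticePolytope (polarDual Δ)

lemma mem_polarDual_hull {n : ℕ} {S : Set (Fin n → ℝ)} {m : Fin n → ℝ} :
    m ∈ polarDual (convexHull ℝ S) ↔ ∀ x ∈ S, -1 ≤ ∑ i, m i * x i := by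
  constructor
  · intro h x hx
    exact h x (subset_convexHull ℝ S hx)
  · intro h x hx
    have hlin : IsLinearMap ℝ (fun x : Fin n → ℝ => ∑ i, m i * x i) := by
      constructor
      · intro y z; simp [mul_add, Finset.sum_add_distrib]
      · intro c y; simp [Finset.mul_sum, mul_left_comm]
    exact convexHull_min (fun y hy => h y hy) (convex_halfSpace_ge hlin (-1)) hx

lemma convex_polarDual {n : ℕ} (Δ : Set (Fin n → ℝ)) : Convex ℝ (polarDual Δ) := by
  intro m hm m' hm' θ θ' hθ hθ' hsum x hx
  have h1 := hm x hx
  have h2 := hm' x hx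
  have : ∑ i, (θ • m + θ' • m') i * x i = θ * ∑ i, m i * x i + θ' * ∑ i, m' i * x i := by
    simp [Finset.mul_sum, add_mul, Finset.sum_add_distrib, mul_assoc]
  rw [this]
  nlinarith

set_option maxHeartbeats 2000000 in
/-- The dual of the polytope
`Δ₂ = Conv(e₁, e₂, e₃, e₄, (-1,-1,-1,-1), (1,1,1,1), (0,0,0,-1)) ⊆ ℝ⁴` is the convex hull
of the twelve listed lattice points; in particular `Δ₂` is reflexive. -/
theorem delta_two_dual_and_reflexive
    (Δ₂ : Set (Fin 4 → ℝ))
    (hΔ₂ : Δ₂ = convexHull ℝ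
      {![(1:ℝ), 0, 0, 0], ![(0:ℝ), 1, 0, 0], ![(0:ℝ), 0, 1, 0], ![(0:ℝ), 0, 0, 1],
       ![(-1:ℝ), -1, -1, -1], ![(1:ℝ), 1, 1, 1], ![(0:ℝ), 0, 0, -1]}) :
    polarDual Δ₂ = convexHull ℝ
      {![(4:ℝ), -1, -1, -1], ![(-1:ℝ), 4, -1, -1], ![(-1:ℝ), -1, 4, -1],
       ![(2:ℝ), -1, -1, -1], ![(-1:ℝ), 2, -1, -1], ![(-1:ℝ), -1, 2, -1],
       ![(0:ℝ), -1, -1, 1], ![(-1:ℝ), 0, -1, 1], ![(-1:ℝ), -1, 0, 1],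
       ![(2:ℝ), -1, -1, 1], ![(-1:ℝ), 2, -1, 1], ![(-1:ℝ), -1, 2, 1]} ∧
    IsReflexive Δ₂ := by
  subst hΔ₂
  set V7 : Set (Fin 4 → ℝ) :=
      {![(1:ℝ), 0, 0, 0], ![(0:ℝ), 1, 0, 0], ![(0:ℝ), 0, 1, 0], ![(0:ℝ), 0, 0, 1],
       ![(-1:ℝ), -1, -1, -1], ![(1:ℝ), 1, 1, 1], ![(0:ℝ), 0, 0, -1]} with hV7
  set V12 : Set (Fin 4 → ℝ) :=
      {![(4:ℝ), -1, -1, -1], ![(-1:ℝ), 4, -1, -1], ![(-1:ℝ), -1, 4, -1],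
       ![(2:ℝ), -1, -1, -1], ![(-1:ℝ), 2, -1, -1], ![(-1:ℝ), -1, 2, -1],
       ![(0:ℝ), -1, -1, 1], ![(-1:ℝ), 0, -1, 1], ![(-1:ℝ), -1, 0, 1],
       ![(2:ℝ), -1, -1, 1], ![(-1:ℝ), 2, -1, 1], ![(-1:ℝ), -1, 2, 1]} with hV12
  have key : polarDual (convexHull ℝ V7) = convexHull ℝ V12 := by
    apply Set.Subset.antisymm
    · -- hard direction
      intro m hm
      rw [mem_polarDual_hull] at hm
      have h0 : -1 ≤ m 0 := by
        have := hm ![(1:ℝ), 0, 0, 0] (by simp [hV7])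
        simpa [Fin.sum_univ_four] using this
      have h1 : -1 ≤ m 1 := by
        have := hm ![(0:ℝ), 1, 0, 0] (by simp [hV7])
        simpa [Fin.sum_univ_four] using this
      have h2 : -1 ≤ m 2 := by
        have := hm ![(0:ℝ), 0, 1, 0] (by simp [hV7])
        simpa [Fin.sum_univ_four] using this
      have h3 : -1 ≤ m 3 := by
        have := hm ![(0:ℝ), 0, 0, 1] (by simp [hV7])
        simpa [Fin.sum_univ_four] using this
      have h4 : m 0 + m 1 + m 2 + m 3 ≤ 1 := by
        have := hm ![(-1:ℝ), -1, -1, -1] (by simp [hV7])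
        simp [Fin.sum_univ_four] at this
        linarith
      have h5 : -1 ≤ m 0 + m 1 + m 2 + m 3 := by
        have := hm ![(1:ℝ), 1, 1, 1] (by simp [hV7])
        simp [Fin.sum_univ_four] at this
        linarith
      have h6 : m 3 ≤ 1 := by
        have := hm ![(0:ℝ), 0, 0, -1] (by simp [hV7])
        simp [Fin.sum_univ_four] at this
        linarith
      have e1 : (0:ℝ) ≤ (1 - m 3) * (1 + (m 0 + m 1 + m 2 + m 3)) :=
        mul_nonneg (by linarith) (by linarith)
      have e2 : (0:ℝ) ≤ (1 - m 3) * (1 - (m 0 + m 1 + m 2 + m 3)) :=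
        mul_nonneg (by linarith) (by linarith)
      have e3 : (0:ℝ) ≤ (1 + m 3) * (1 - (m 0 + m 1 + m 2 + m 3)) :=
        mul_nonneg (by linarith) (by linarith)
      have e4 : (0:ℝ) ≤ (1 + m 3) * (1 + (m 0 + m 1 + m 2 + m 3)) :=
        mul_nonneg (by linarith) (by linarith)
      set w : Fin 12 → ℝ :=
        ![(m 0+1)*((1-m 3)*(1+(m 0+m 1+m 2+m 3))), (m 1+1)*((1-m 3)*(1+(m 0+m 1+m 2+m 3))),
          (m 2+1)*((1-m 3)*(1+(m 0+m 1+m 2+m 3))),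
          (m 0+1)*((1-m 3)*(1-(m 0+m 1+m 2+m 3))), (m 1+1)*((1-m 3)*(1-(m 0+m 1+m 2+m 3))),
          (m 2+1)*((1-m 3)*(1-(m 0+m 1+m 2+m 3))),
          (m 0+1)*((1+m 3)*(1-(m 0+m 1+m 2+m 3))), (m 1+1)*((1+m 3)*(1-(m 0+m 1+m 2+m 3))),
          (m 2+1)*((1+m 3)*(1-(m 0+m 1+m 2+m 3))),
          (m 0+1)*((1+m 3)*(1+(m 0+m 1+m 2+m 3))), (m 1+1)*((1+m 3)*(1+(m 0+m 1+m 2+m 3))),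
          (m 2+1)*((1+m 3)*(1+(m 0+m 1+m 2+m 3)))] with hw
      set z : Fin 12 → (Fin 4 → ℝ) :=
        ![![(4:ℝ), -1, -1, -1], ![(-1:ℝ), 4, -1, -1], ![(-1:ℝ), -1, 4, -1],
          ![(2:ℝ), -1, -1, -1], ![(-1:ℝ), 2, -1, -1], ![(-1:ℝ), -1, 2, -1],
          ![(0:ℝ), -1, -1, 1], ![(-1:ℝ), 0, -1, 1], ![(-1:ℝ), -1, 0, 1],
          ![(2:ℝ), -1, -1, 1], ![(-1:ℝ), 2, -1, 1], ![(-1:ℝ), -1, 2, 1]] with hz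
      have q0 : (0:ℝ) ≤ m 0 + 1 := by linarith
      have q1 : (0:ℝ) ≤ m 1 + 1 := by linarith
      have q2 : (0:ℝ) ≤ m 2 + 1 := by linarith
      have hwnn' : ∀ i : Fin 12, 0 ≤ w i := by
        rw [hw]
        simp only [Fin.forall_fin_succ, Matrix.cons_val_zero, Matrix.cons_val_succ,
          IsEmpty.forall_iff, and_true]
        exact ⟨mul_nonneg q0 e1, mul_nonneg q1 e1, mul_nonneg q2 e1,
          mul_nonneg q0 e2, mul_nonneg q1 e2, mul_nonneg q2 e2,
          mul_nonneg q0 e3, mul_nonneg q1 e3, mul_nonneg q2 e3,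
          mul_nonneg q0 e4, mul_nonneg q1 e4, mul_nonneg q2 e4⟩
      have hwnn : ∀ i ∈ (Finset.univ : Finset (Fin 12)), 0 ≤ w i := fun i _ => hwnn' i
      have hsum : ∑ i : Fin 12, w i = 4 * (m 0 + m 1 + m 2 + 3) := by
        simp [hw, Fin.sum_univ_succ]
        ring
      have hpos : (0:ℝ) < ∑ i : Fin 12, w i := by
        rw [hsum]; nlinarith
      have hzmem' : ∀ i : Fin 12, z i ∈ V12 := by
        rw [hz]
        simp only [Fin.forall_fin_succ, Matrix.cons_val_zero, Matrix.cons_val_succ,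
          IsEmpty.forall_iff, and_true]
        refine ⟨?_,?_,?_,?_,?_,?_,?_,?_,?_,?_,?_,?_⟩ <;> simp [hV12]
      have hzmem : ∀ i ∈ (Finset.univ : Finset (Fin 12)), z i ∈ V12 := fun i _ => hzmem' i
      have hcm : (Finset.univ : Finset (Fin 12)).centerMass w z = m := by
        rw [Finset.centerMass, hsum, inv_smul_eq_iff₀ (by nlinarith)]
        funext k
        have hexp : (∑ i : Fin 12, w i • z i) k = ∑ i : Fin 12, w i * z i k := by
          simp [Finset.sum_apply]
        have hrhs : ((4 * (m 0 + m 1 + m 2 + 3)) • m) k = 4 * (m 0 + m 1 + m 2 + 3) * m k := by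
          simp [Pi.smul_apply]
        rw [hrhs, hexp]
        fin_cases k <;> simp [hw, hz, Fin.sum_univ_succ] <;> ring
      rw [← hcm]
      exact Finset.centerMass_mem_convexHull _ hwnn hpos hzmem
    · refine convexHull_min ?_ (convex_polarDual _)
      intro p hp
      rw [mem_polarDual_hull]
      intro x hx
      simp only [hV12, hV7, Set.mem_insert_iff, Set.mem_singleton_iff] at hp hx
      rcases hp with rfl|rfl|rfl|rfl|rfl|rfl|rfl|rfl|rfl|rfl|rfl|rfl <;>
        rcases hx with rfl|rfl|rfl|rfl|rfl|rfl|rfl <;>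
          norm_num [Fin.sum_univ_four, Matrix.cons_val_two, Matrix.cons_val_three, Matrix.head_cons, Matrix.tail_cons]
  refine ⟨key, ?_, ?_, ?_⟩
  · -- lattice polytope Δ₂
    refine ⟨{![(1:ℝ), 0, 0, 0], ![(0:ℝ), 1, 0, 0], ![(0:ℝ), 0, 1, 0], ![(0:ℝ), 0, 0, 1],
       ![(-1:ℝ), -1, -1, -1], ![(1:ℝ), 1, 1, 1], ![(0:ℝ), 0, 0, -1]}, ?_, ?_⟩
    · intro x hx
      simp only [Finset.mem_insert, Finset.mem_singleton] at hx
      rcases hx with rfl|rfl|rfl|rfl|rfl|rfl|rfl <;>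
        · intro i
          fin_cases i <;>
            first
              | (refine ⟨0, ?_⟩; norm_num; done)
              | (refine ⟨1, ?_⟩; norm_num; done)
              | (refine ⟨-1, ?_⟩; norm_num; done)
    · congr 1
      simp [hV7]
  · -- 0 in interior
    rw [mem_interior]
    refine ⟨Metric.ball 0 (1/16), ?_, Metric.isOpen_ball, by norm_num⟩
    intro x hx
    rw [Metric.mem_ball, dist_zero_right] at hx
    have hx' : ∀ i, |x i| < 1/16 := by
      intro i
      have := (pi_norm_lt_iff (by norm_num : (0:ℝ) < 1/16)).mp hx i
      simpa [Real.norm_eq_abs] using this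
    have ha0 := abs_lt.mp (hx' 0)
    have ha1 := abs_lt.mp (hx' 1)
    have ha2 := abs_lt.mp (hx' 2)
    have ha3 := abs_lt.mp (hx' 3)
    set w : Fin 7 → ℝ :=
      ![x 0 + 1/16, x 1 + 1/16, x 2 + 1/16, x 3 + 1/16,
        (13/16 - (x 0 + x 1 + x 2 + x 3))/2, (11/16 - (x 0 + x 1 + x 2 + x 3))/2, 0] with hw
    set z : Fin 7 → (Fin 4 → ℝ) :=
      ![![(1:ℝ), 0, 0, 0], ![(0:ℝ), 1, 0, 0], ![(0:ℝ), 0, 1, 0], ![(0:ℝ), 0, 0, 1],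
        ![(-1:ℝ), -1, -1, -1], ![(1:ℝ), 1, 1, 1], ![(0:ℝ), 0, 0, -1]] with hz
    have hwnn' : ∀ i : Fin 7, 0 ≤ w i := by
      rw [hw]
      simp only [Fin.forall_fin_succ, Matrix.cons_val_zero, Matrix.cons_val_succ,
        IsEmpty.forall_iff, and_true]
      refine ⟨by linarith, by linarith, by linarith, by linarith, by linarith,
        by linarith, le_refl 0⟩
    have hwnn : ∀ i ∈ (Finset.univ : Finset (Fin 7)), 0 ≤ w i := fun i _ => hwnn' i
    have hsum : ∑ i : Fin 7, w i = 1 := by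
      simp [hw, Fin.sum_univ_succ]
      ring
    have hpos : (0:ℝ) < ∑ i : Fin 7, w i := by rw [hsum]; norm_num
    have hzmem' : ∀ i : Fin 7, z i ∈ V7 := by
      rw [hz]
      simp only [Fin.forall_fin_succ, Matrix.cons_val_zero, Matrix.cons_val_succ,
        IsEmpty.forall_iff, and_true]
      refine ⟨?_,?_,?_,?_,?_,?_,?_⟩ <;> simp [hV7]
    have hzmem : ∀ i ∈ (Finset.univ : Finset (Fin 7)), z i ∈ V7 := fun i _ => hzmem' i
    have hcm : (Finset.univ : Finset (Fin 7)).centerMass w z = x := by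
      rw [Finset.centerMass, hsum, inv_one, one_smul]
      funext k
      have hexp : (∑ i : Fin 7, w i • z i) k = ∑ i : Fin 7, w i * z i k := by
        simp [Finset.sum_apply]
      rw [hexp]
      fin_cases k <;> simp [hw, hz, Fin.sum_univ_succ] <;> ring
    rw [← hcm]
    exact Finset.centerMass_mem_convexHull _ hwnn hpos hzmem
  · -- dual lattice polytope
    rw [key]
    refine ⟨{![(4:ℝ), -1, -1, -1], ![(-1:ℝ), 4, -1, -1], ![(-1:ℝ), -1, 4, -1],
       ![(2:ℝ), -1, -1, -1], ![(-1:ℝ), 2, -1, -1], ![(-1:ℝ), -1, 2, -1],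
       ![(0:ℝ), -1, -1, 1], ![(-1:ℝ), 0, -1, 1], ![(-1:ℝ), -1, 0, 1],
       ![(2:ℝ), -1, -1, 1], ![(-1:ℝ), 2, -1, 1], ![(-1:ℝ), -1, 2, 1]}, ?_, ?_⟩
    · intro x hx
      simp only [Finset.mem_insert, Finset.mem_singleton] at hx
      rcases hx with rfl|rfl|rfl|rfl|rfl|rfl|rfl|rfl|rfl|rfl|rfl|rfl <;>
        · intro i
          fin_cases i <;>
            first
              | (refine ⟨0, ?_⟩; norm_num; done)
              | (refine ⟨1, ?_⟩; norm_num; done)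
              | (refine ⟨-1, ?_⟩; norm_num; done)
              | (refine ⟨2, ?_⟩; norm_num; done)
              | (refine ⟨4, ?_⟩; norm_num; done)
    · congr 1
      simp [hV12]
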